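/- Let 0 < α < 1 and σ = 1 − α/2. For every integer l ≥ 1 define b_l^{(α,σ)} = (1/(2−α)) [(l+σ)^{2−α} − (l−1+σ)^{2−α}] − (1/2) [(l+σ)^{1−α} + (l−1+σ)^{1−α}]. Then b_l^{(α,σ)} > 0 for all l ≥ 1. -/

import Mathlib

/-!
For `p = 1 - α ∈ (0, 1)` the function `x ↦ x ^ p` is strictly concave, so on `[a, a + 1]` it lies
above its chord, strictly at the midpoint. Integrating, the trapezoid value `(a ^ p + (a + 1) ^ p) / 2`
is strictly below `∫ x in a..a+1, x ^ p = ((a + 1) ^ (p + 1) - a ^ (p + 1)) / (p + 1)`. With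
`a = l - 1 + σ ≥ σ > 0` this difference is exactly `b_l^{(α,σ)}`.
-/

open Set intervalIntegral

theorem ConcaveOn.chord_le {f : ℝ → ℝ} {a b x : ℝ} (hf : ConcaveOn ℝ (Icc a b) f) (hab : a < b)
    (hx : x ∈ Icc a b) : ((b - x) * f a + (x - a) * f b) / (b - a) ≤ f x := by
  have hba : 0 < b - a := sub_pos.2 hab
  have h := hf.2 (left_mem_Icc.2 hab.le) (right_mem_Icc.2 hab.le)
    (div_nonneg (sub_nonneg.2 hx.2) hba.le) (div_nonneg (sub_nonneg.2 hx.1) hba.le)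
    (by field_simp; ring)
  have hcomb : ((b - x) / (b - a)) • a + ((x - a) / (b - a)) • b = x := by
    simp only [smul_eq_mul]; field_simp; ring
  rw [hcomb, smul_eq_mul, smul_eq_mul] at h
  calc ((b - x) * f a + (x - a) * f b) / (b - a)
      = (b - x) / (b - a) * f a + (x - a) / (b - a) * f b := by ring
    _ ≤ f x := h

theorem StrictConcaveOn.chord_midpoint_lt {f : ℝ → ℝ} {a b : ℝ} (hf : StrictConcaveOn ℝ (Icc a b) f)
    (hab : a < b) :
    ((b - (a + b) / 2) * f a + ((a + b) / 2 - a) * f b) / (b - a) < f ((a + b) / 2) := by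
  have h := hf.2 (left_mem_Icc.2 hab.le) (right_mem_Icc.2 hab.le) hab.ne one_half_pos one_half_pos
    (add_halves 1)
  have hchord : ((b - (a + b) / 2) * f a + ((a + b) / 2 - a) * f b) / (b - a)
      = (1 / 2 : ℝ) • f a + (1 / 2 : ℝ) • f b := by
    rw [div_eq_iff (sub_pos.2 hab).ne', smul_eq_mul, smul_eq_mul]; ring
  rwa [hchord, show (a + b) / 2 = (1 / 2 : ℝ) • a + (1 / 2 : ℝ) • b by simp only [smul_eq_mul]; ring]

theorem integral_chord (a b u v : ℝ) (hab : a ≠ b) :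
    ∫ x in a..b, ((b - x) * u + (x - a) * v) / (b - a) = (b - a) * ((u + v) / 2) := by
  have hba : b - a ≠ 0 := sub_ne_zero.2 hab.symm
  rw [integral_div, integral_add ((by fun_prop : Continuous _).intervalIntegrable _ _)
    ((by fun_prop : Continuous _).intervalIntegrable _ _), integral_mul_const,
    integral_mul_const, integral_sub intervalIntegrable_const intervalIntegral.intervalIntegrable_id,
    integral_sub intervalIntegral.intervalIntegrable_id intervalIntegrable_const]
  simp only [integral_const, integral_id, smul_eq_mul]
  field_simp
  ring

theorem StrictConcaveOn.trapezoid_lt_integral {f : ℝ → ℝ} {a b : ℝ} (hab : a < b)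
    (hf : StrictConcaveOn ℝ (Icc a b) f) (hfc : ContinuousOn f (Icc a b)) :
    (b - a) * ((f a + f b) / 2) < ∫ x in a..b, f x := by
  rw [← integral_chord a b (f a) (f b) hab.ne]
  refine integral_lt_integral_of_continuousOn_of_le_of_exists_lt hab (by fun_prop) hfc
    (fun x hx => hf.concaveOn.chord_le hab (Ioc_subset_Icc_self hx))
    ⟨(a + b) / 2, ⟨by linarith, by linarith⟩, hf.chord_midpoint_lt hab⟩

theorem Real.rpow_trapezoid_lt {p a : ℝ} (hp0 : 0 < p) (hp1 : p < 1) (ha : 0 ≤ a) :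
    (a ^ p + (a + 1) ^ p) / 2 < ((a + 1) ^ (p + 1) - a ^ (p + 1)) / (p + 1) := by
  have hconc : StrictConcaveOn ℝ (Icc a (a + 1)) (fun x : ℝ => x ^ p) :=
    (Real.strictConcaveOn_rpow hp0 hp1).subset (Icc_subset_Ici_iff (by linarith) |>.2 ha)
      (convex_Icc _ _)
  have hcont : ContinuousOn (fun x : ℝ => x ^ p) (Icc a (a + 1)) :=
    fun x _ => (Real.continuousAt_rpow_const _ _ (Or.inr hp0.le)).continuousWithinAt
  have h := hconc.trapezoid_lt_integral (lt_add_one a) hcont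
  rwa [integral_rpow (Or.inl (by linarith)), add_sub_cancel_left, one_mul] at h

/-- Corollary 2 (Alikhanov, L2-1_σ paper): for `0 < α < 1`, `σ = 1 − α/2`, the coefficients
`b_l^{(α,σ)} = (1/(2−α))[(l+σ)^{2−α} − (l−1+σ)^{2−α}] − (1/2)[(l+σ)^{1−α} + (l−1+σ)^{1−α}]`
are positive for all `l ≥ 1`. -/
theorem b_coeff_pos (α σ : ℝ) (hα0 : 0 < α) (hα1 : α < 1) (hσ : σ = 1 - α / 2)
    (l : ℕ) (hl : 1 ≤ l) :
    0 < (1 / (2 - α)) * (((l : ℝ) + σ) ^ (2 - α) - ((l : ℝ) - 1 + σ) ^ (2 - α)) -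
        (1 / 2) * (((l : ℝ) + σ) ^ (1 - α) + ((l : ℝ) - 1 + σ) ^ (1 - α)) := by
  have hl1 : (1 : ℝ) ≤ l := by exact_mod_cast hl
  have key := Real.rpow_trapezoid_lt (p := 1 - α) (a := (l : ℝ) - 1 + σ)
    (by linarith) (by linarith) (by rw [hσ]; linarith)
  rw [show (l : ℝ) - 1 + σ + 1 = l + σ by ring, show 1 - α + 1 = 2 - α by ring] at key
  rw [one_div_mul_eq_div]
  linarith
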